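/- Let G be a star 5-critical subcubic simple graph, and let x be a vertex of degree 2 with N_G(x) = {z, w}, where d_G(z) ≤ d_G(w). Suppose d_G(z) = 2 and write N_G(z) = {x, z*}. Then d_G(z*) = d_G(w) = 3, and every vertex v ∈ N_G(w) ∪ N_G(z*) has degree at least 2 in G. -/

import Mathlib

/-!
Deleting `x` leaves a star `5`-edge-colorable graph, and a coloring `c` of `G - x` extends to `G`
as soon as `xz` gets a color missing at `z*` and different from that of `xw`, while `xw` gets a
color missing on all edges within distance one of `w` and different from `c(zz*)`. In a subcubic
graph at most four colors are forbidden if `w` has at most one neighbor besides `x`, and also if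
`w` has a pendant neighbor `v` once `wv` is recolored; criticality rules out both. Deleting `z`
instead, with `(x, w)` and `(z, z*)` exchanged, handles `z*`.
-/

open SimpleGraph

/-- A star `k`-edge-coloring of `G`: a proper edge-coloring (adjacent edges get
distinct colors) such that no path or cycle of length four is bicolored, i.e.
no walk on four pairwise-distinct edges has its first and third edges equally
colored and its second and fourth edges equally colored. -/
def IsStarEdgeColoring {V : Type*} (G : SimpleGraph V) (k : ℕ)
    (c : Sym2 V → Fin k) : Prop :=
  (∀ e₁ ∈ G.edgeSet, ∀ e₂ ∈ G.edgeSet, e₁ ≠ e₂ → (∃ v, v ∈ e₁ ∧ v ∈ e₂) →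
      c e₁ ≠ c e₂) ∧
  (∀ v₀ v₁ v₂ v₃ v₄ : V, G.Adj v₀ v₁ → G.Adj v₁ v₂ → G.Adj v₂ v₃ → G.Adj v₃ v₄ →
    ([s(v₀, v₁), s(v₁, v₂), s(v₂, v₃), s(v₃, v₄)] : List (Sym2 V)).Pairwise (· ≠ ·) →
    ¬(c s(v₀, v₁) = c s(v₂, v₃) ∧ c s(v₁, v₂) = c s(v₃, v₄)))

/-- `G` admits a star `k`-edge-coloring; equivalently, `χ'_s(G) ≤ k`. -/
def StarEdgeColorable {V : Type*} (G : SimpleGraph V) (k : ℕ) : Prop :=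
  ∃ c : Sym2 V → Fin k, IsStarEdgeColoring G k c

/-- The graph `G - x` obtained from `G` by deleting the vertex `x`
(keeping the ambient vertex type; `x` becomes isolated, which does not affect
edge-colorings). -/
def SimpleGraph.deleteVert {V : Type*} (G : SimpleGraph V) (x : V) : SimpleGraph V where
  Adj u w := G.Adj u w ∧ u ≠ x ∧ w ≠ x
  symm := ⟨fun u w h => ⟨h.1.symm, h.2.2, h.2.1⟩⟩
  loopless := ⟨fun u h => G.loopless.irrefl u h.1⟩

/-- `G` is star `k`-critical: `χ'_s(G) > k` but `χ'_s(G - v) ≤ k` for every vertex `v`. -/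
def StarCritical {V : Type*} (G : SimpleGraph V) (k : ℕ) : Prop :=
  ¬ StarEdgeColorable G k ∧ ∀ v : V, StarEdgeColorable (G.deleteVert v) k

/-- The set of colors used by `c` on edges of `H` incident with `u`. -/
def colorsAt {V : Type*} (H : SimpleGraph V) {k : ℕ} (c : Sym2 V → Fin k) (u : V) :
    Set (Fin k) :=
  {a | ∃ w, H.Adj u w ∧ c s(u, w) = a}

namespace SimpleGraph

variable {V : Type*}

theorem deleteVert_le (G : SimpleGraph V) (x : V) : G.deleteVert x ≤ G :=
  fun _ _ h => h.1

theorem ncard_neighborSet_eq_degree (G : SimpleGraph V) [Fintype V] [DecidableRel G.Adj] (v : V) :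
    (G.neighborSet v).ncard = G.degree v := by
  rw [Set.ncard_eq_toFinset_card', ← G.neighborFinset_def, G.card_neighborFinset_eq_degree]

theorem eq_of_adj_of_degree_le_one {G : SimpleGraph V} [Fintype V] [DecidableRel G.Adj]
    {v w t : V} (hv : G.degree v ≤ 1) (hw : G.Adj v w) (ht : G.Adj v t) : t = w := by
  rw [← G.card_neighborFinset_eq_degree, Finset.card_le_one] at hv
  exact hv t (by simpa using ht) w (by simpa using hw)

theorem exists_adj_imp_eq_or_mem [DecidableEq V] {G : SimpleGraph V} [Fintype V]
    [DecidableRel G.Adj] {v : V} {s : Finset V} (hs : s ⊆ G.neighborFinset v)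
    (hv : G.degree v ≤ s.card + 1) : ∃ y, ∀ t, G.Adj v t → t = y ∨ t ∈ s := by
  have hcard : (G.neighborFinset v \ s).card ≤ 1 := by
    rw [Finset.card_sdiff_of_subset hs, G.card_neighborFinset_eq_degree]
    omega
  have : Nonempty V := ⟨v⟩
  obtain ⟨y, hy⟩ := Finset.card_le_one_iff_subset_singleton.mp hcard
  refine ⟨y, fun t ht => ?_⟩
  by_cases hts : t ∈ s
  · exact Or.inr hts
  · exact Or.inl (Finset.mem_singleton.mp
      (hy (Finset.mem_sdiff.mpr ⟨(G.mem_neighborFinset v t).mpr ht, hts⟩)))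

end SimpleGraph

section StarEdgeColoring

variable {V : Type*} {k : ℕ}

/-- For a proper edge-coloring these are exactly the bicolored paths and cycles of length
four: the four edges are then pairwise distinct as soon as consecutive ones are. -/
def IsBicoloredWalk (G : SimpleGraph V) (c : Sym2 V → Fin k) (v₀ v₁ v₂ v₃ v₄ : V) : Prop :=
  G.Adj v₀ v₁ ∧ G.Adj v₁ v₂ ∧ G.Adj v₂ v₃ ∧ G.Adj v₃ v₄ ∧ v₀ ≠ v₂ ∧ v₁ ≠ v₃ ∧ v₂ ≠ v₄ ∧
    c s(v₀, v₁) = c s(v₂, v₃) ∧ c s(v₁, v₂) = c s(v₃, v₄)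

def IsProperEdgeColoring (G : SimpleGraph V) (c : Sym2 V → Fin k) : Prop :=
  ∀ ⦃a b d⦄, G.Adj a b → G.Adj a d → b ≠ d → c s(a, b) ≠ c s(a, d)

theorem IsBicoloredWalk.reverse {G : SimpleGraph V} {c : Sym2 V → Fin k} {v₀ v₁ v₂ v₃ v₄ : V}
    (h : IsBicoloredWalk G c v₀ v₁ v₂ v₃ v₄) : IsBicoloredWalk G c v₄ v₃ v₂ v₁ v₀ := by
  obtain ⟨h₀₁, h₁₂, h₂₃, h₃₄, h₀₂, h₁₃, h₂₄, hA, hB⟩ := h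
  refine ⟨h₃₄.symm, h₂₃.symm, h₁₂.symm, h₀₁.symm, h₂₄.symm, h₁₃.symm, h₀₂.symm, ?_, ?_⟩
  · rw [Sym2.eq_swap (a := v₄), Sym2.eq_swap (a := v₂), hB]
  · rw [Sym2.eq_swap (a := v₃), Sym2.eq_swap (a := v₁), hA]

theorem isStarEdgeColoring_iff {G : SimpleGraph V} {c : Sym2 V → Fin k} :
    IsStarEdgeColoring G k c ↔
      IsProperEdgeColoring G c ∧ ∀ v₀ v₁ v₂ v₃ v₄, ¬ IsBicoloredWalk G c v₀ v₁ v₂ v₃ v₄ := by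
  constructor
  · rintro ⟨hprop, hstar⟩
    have hproper : IsProperEdgeColoring G c := fun a b d hab had hbd =>
      hprop _ hab _ had (fun h => hbd (Sym2.congr_right.mp h)) ⟨a, by simp, by simp⟩
    refine ⟨hproper, ?_⟩
    rintro v₀ v₁ v₂ v₃ v₄ ⟨h₀₁, h₁₂, h₂₃, h₃₄, h₀₂, h₁₃, h₂₄, hA, hB⟩
    refine hstar v₀ v₁ v₂ v₃ v₄ h₀₁ h₁₂ h₂₃ h₃₄ ?_ ⟨hA, hB⟩
    -- the first and last edges differ because their colors do
    have h₁₄ : s(v₀, v₁) ≠ s(v₃, v₄) := fun h => by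
      refine hproper h₀₁.symm h₁₂ h₀₂ ?_
      rw [Sym2.eq_swap, h, ← hB]
    simp [h₀₂, h₁₃, h₂₄, h₀₁.ne, h₁₂.ne, h₂₃.ne, h₃₄.ne, h₁₄]
  · rintro ⟨hproper, hwalk⟩
    refine ⟨fun e₁ _ e₂ _ hne ⟨v, hv₁, hv₂⟩ => ?_,
      fun v₀ v₁ v₂ v₃ v₄ h₀₁ h₁₂ h₂₃ h₃₄ hpw hbi => ?_⟩
    · obtain ⟨b, rfl⟩ := Sym2.mem_iff_exists.mp hv₁
      obtain ⟨d, rfl⟩ := Sym2.mem_iff_exists.mp hv₂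
      exact hproper (by assumption) (by assumption) (fun h => hne (by rw [h]))
    · simp only [List.pairwise_cons, List.mem_cons, forall_eq_or_imp] at hpw
      refine hwalk v₀ v₁ v₂ v₃ v₄ ⟨h₀₁, h₁₂, h₂₃, h₃₄, ?_, ?_, ?_, hbi⟩
      · rintro rfl; exact hpw.1.1 Sym2.eq_swap
      · rintro rfl; exact hpw.2.1.1 Sym2.eq_swap
      · rintro rfl; exact hpw.2.2.1.1 Sym2.eq_swap

end StarEdgeColoring

section Extension

variable {V : Type*} {k : ℕ} {G : SimpleGraph V} {c c' : Sym2 V → Fin k}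

theorem IsStarEdgeColoring.mono {H : SimpleGraph V} (hc : IsStarEdgeColoring G k c)
    (hH : H ≤ G) : IsStarEdgeColoring H k c := by
  rw [isStarEdgeColoring_iff] at hc ⊢
  exact ⟨fun a b d hab had => hc.1 (hH hab) (hH had),
    fun v₀ v₁ v₂ v₃ v₄ ⟨h₀₁, h₁₂, h₂₃, h₃₄, h⟩ => hc.2 v₀ v₁ v₂ v₃ v₄
      ⟨hH h₀₁, hH h₁₂, hH h₂₃, hH h₃₄, h⟩⟩

theorem IsStarEdgeColoring.of_deleteVert {x : V} (hc : IsStarEdgeColoring (G.deleteVert x) k c)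
    (hagree : ∀ a b, a ≠ x → b ≠ x → c' s(a, b) = c s(a, b))
    (hx : ∀ b d, G.Adj x b → G.Adj x d → b ≠ d → c' s(x, b) ≠ c' s(x, d))
    (hnbr : ∀ a d, G.Adj x a → G.Adj a d → d ≠ x → c' s(a, x) ≠ c' s(a, d))
    (h₀ : ∀ v₁ v₂ v₃ v₄, ¬ IsBicoloredWalk G c' x v₁ v₂ v₃ v₄)
    (h₁ : ∀ v₀ v₂ v₃ v₄, ¬ IsBicoloredWalk G c' v₀ x v₂ v₃ v₄)
    (h₂ : ∀ v₀ v₁ v₃ v₄, ¬ IsBicoloredWalk G c' v₀ v₁ x v₃ v₄) :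
    IsStarEdgeColoring G k c' := by
  rw [isStarEdgeColoring_iff] at hc ⊢
  refine ⟨fun a b d hab had hbd => ?_, fun v₀ v₁ v₂ v₃ v₄ hw => ?_⟩
  · by_cases hax : a = x
    · subst hax; exact hx b d hab had hbd
    by_cases hbx : b = x
    · subst hbx; exact hnbr a d hab.symm had (Ne.symm hbd)
    by_cases hdx : d = x
    · subst hdx; exact (hnbr a b had.symm hab hbx).symm
    rw [hagree a b hax hbx, hagree a d hax hdx]
    exact hc.1 ⟨hab, hax, hbx⟩ ⟨had, hax, hdx⟩ hbd
  · by_cases h0 : v₀ = x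
    · subst h0; exact h₀ _ _ _ _ hw
    by_cases h1 : v₁ = x
    · subst h1; exact h₁ _ _ _ _ hw
    by_cases h2 : v₂ = x
    · subst h2; exact h₂ _ _ _ _ hw
    by_cases h3 : v₃ = x
    · subst h3; exact h₁ _ _ _ _ hw.reverse
    by_cases h4 : v₄ = x
    · subst h4; exact h₀ _ _ _ _ hw.reverse
    obtain ⟨h₀₁, h₁₂, h₂₃, h₃₄, h₀₂, h₁₃, h₂₄, hA, hB⟩ := hw
    refine hc.2 v₀ v₁ v₂ v₃ v₄ ⟨⟨h₀₁, h0, h1⟩, ⟨h₁₂, h1, h2⟩, ⟨h₂₃, h2, h3⟩, ⟨h₃₄, h3, h4⟩,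
      h₀₂, h₁₃, h₂₄, ?_, ?_⟩
    · rwa [← hagree _ _ h0 h1, ← hagree _ _ h2 h3]
    · rwa [← hagree _ _ h1 h2, ← hagree _ _ h3 h4]

variable [DecidableEq V]

theorem IsStarEdgeColoring.extend_pendant {v w : V} {m : Fin k}
    (hc : IsStarEdgeColoring (G.deleteVert v) k c) (hv : ∀ t, G.Adj v t → t = w)
    (hm : ∀ t, G.Adj w t → t ≠ v → m ∉ colorsAt G c t) :
    IsStarEdgeColoring G k (fun e => if v ∈ e then m else c e) := by
  refine hc.of_deleteVert (fun a b ha hb => by simp [Ne.symm ha, Ne.symm hb]) ?_ ?_ ?_ ?_ ?_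
  · intro b d hb hd hbd
    exact absurd ((hv b hb).trans (hv d hd).symm) hbd
  · intro a d ha had hdv
    obtain rfl := hv a ha
    simp only [Sym2.mem_iff, or_true, if_true, ha.ne, Ne.symm hdv, or_self, if_false]
    exact fun h => hm d had hdv ⟨a, had.symm, by rw [Sym2.eq_swap, h]⟩
  · rintro v₁ v₂ v₃ v₄ ⟨h₀₁, h₁₂, h₂₃, -, h₀₂, -, -, hA, -⟩
    obtain rfl := hv v₁ h₀₁
    have h₃ : v₃ ≠ v := fun h => h₁₂.ne (hv v₂ (h ▸ h₂₃.symm)).symm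
    simp only [Sym2.mem_iff, true_or, if_true, h₀₂, Ne.symm h₃, or_self, if_false] at hA
    exact hm v₂ h₁₂ (Ne.symm h₀₂) ⟨v₃, h₂₃, hA.symm⟩
  · rintro v₀ v₂ v₃ v₄ ⟨h₀₁, h₁₂, -, -, h₀₂, -⟩
    exact h₀₂ ((hv _ h₀₁.symm).trans (hv _ h₁₂).symm)
  · rintro v₀ v₁ v₃ v₄ ⟨-, h₁₂, h₂₃, -, -, h₁₃, -⟩
    exact h₁₃ ((hv _ h₁₂.symm).trans (hv _ h₂₃).symm)

end Extension

section Thread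

variable {V : Type*} [DecidableEq V] {k : ℕ} {G : SimpleGraph V} {c : Sym2 V → Fin k}
  {x z w zs : V}

theorem IsStarEdgeColoring.extend_thread {α β : Fin k} (hNx : G.neighborSet x = {z, w})
    (hzw : z ≠ w) (hNz : G.neighborSet z = {x, zs}) (hzsx : zs ≠ x)
    (hc : IsStarEdgeColoring (G.deleteVert x) k c) (hαβ : α ≠ β)
    (hα : α ∉ colorsAt (G.deleteVert x) c zs)
    (hβ : ∀ t, (G.deleteVert x).Adj w t → β ∉ colorsAt (G.deleteVert x) c t)
    (hβz : β ≠ c s(z, zs)) :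
    IsStarEdgeColoring G k (fun e => if x ∈ e then if z ∈ e then α else β else c e) := by
  have hx (t : V) : G.Adj x t ↔ t = z ∨ t = w := by simpa using Set.ext_iff.mp hNx t
  have hz (t : V) : G.Adj z t ↔ t = x ∨ t = zs := by simpa using Set.ext_iff.mp hNz t
  have hxz : G.Adj x z := (hx z).2 (Or.inl rfl)
  have hxw : G.Adj x w := (hx w).2 (Or.inr rfl)
  have hzzs : G.Adj z zs := (hz zs).2 (Or.inr rfl)
  have hzx := hxz.ne'
  have hwx := hxw.ne'
  set c' : Sym2 V → Fin k := fun e => if x ∈ e then if z ∈ e then α else β else c e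
  have hc'xz : c' s(x, z) = α ∧ c' s(z, x) = α := by simp [c']
  have hc'xw : c' s(x, w) = β ∧ c' s(w, x) = β := by simp [c', hzw, hzx]
  have hagree (a b : V) (ha : a ≠ x) (hb : b ≠ x) : c' s(a, b) = c s(a, b) := by
    simp [c', Ne.symm ha, Ne.symm hb]
  have hβ' (t r : V) (hwt : G.Adj w t) (htr : G.Adj t r) (htx : t ≠ x) (hrx : r ≠ x) :
      β ≠ c' s(t, r) := by
    rw [hagree t r htx hrx]
    exact fun h => hβ t ⟨hwt, hwx, htx⟩ ⟨r, ⟨htr, htx, hrx⟩, h.symm⟩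
  have hβz' : β ≠ c' s(z, zs) := hagree z zs hzx hzsx ▸ hβz
  refine hc.of_deleteVert hagree ?_ ?_ ?_ ?_ ?_
  · intro b d hb hd hbd
    rcases (hx b).1 hb with rfl | rfl <;> rcases (hx d).1 hd with rfl | rfl
    · exact absurd rfl hbd
    · rw [hc'xz.1, hc'xw.1]; exact hαβ
    · rw [hc'xz.1, hc'xw.1]; exact hαβ.symm
    · exact absurd rfl hbd
  · intro a d ha had hdx
    rcases (hx a).1 ha with rfl | rfl
    · obtain rfl : d = zs := ((hz d).1 had).resolve_left hdx
      rw [hc'xz.2, hagree _ _ hzx hzsx]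
      exact fun h => hα ⟨a, ⟨hzzs.symm, hzsx, hzx⟩, by rw [Sym2.eq_swap, h]⟩
    · rw [hc'xw.2]
      exact Sym2.eq_swap (a := a) ▸ hβ' d a had had.symm hdx hwx
  · rintro v₁ v₂ v₃ v₄ ⟨h₀₁, h₁₂, h₂₃, -, h₀₂, -, -, hA, -⟩
    rcases (hx v₁).1 h₀₁ with rfl | rfl
    · obtain rfl : v₂ = zs := ((hz v₂).1 h₁₂).resolve_left (Ne.symm h₀₂)
      by_cases h₃ : v₃ = x
      · subst h₃
        obtain rfl : v₂ = w := ((hx v₂).1 h₂₃.symm).resolve_left h₁₂.ne'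
        exact hαβ (hc'xz.1 ▸ hc'xw.2 ▸ hA)
      · rw [hc'xz.1, hagree _ _ hzsx h₃] at hA
        exact hα ⟨v₃, ⟨h₂₃, hzsx, h₃⟩, hA.symm⟩
    · by_cases h₃ : v₃ = x
      · subst h₃
        obtain rfl : v₂ = z := ((hx v₂).1 h₂₃.symm).resolve_right h₁₂.ne'
        exact hαβ (hc'xw.1 ▸ hc'xz.2 ▸ hA).symm
      · exact hβ' v₂ v₃ h₁₂ h₂₃ (Ne.symm h₀₂) h₃ (hc'xw.1 ▸ hA)
  · rintro v₀ v₂ v₃ v₄ ⟨h₀₁, h₁₂, h₂₃, h₃₄, h₀₂, h₁₃, -, hA, hB⟩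
    rcases (hx v₀).1 h₀₁.symm with rfl | rfl <;> rcases (hx v₂).1 h₁₂ with rfl | rfl
    · exact h₀₂ rfl
    · by_cases h₄ : v₄ = x
      · subst h₄
        obtain rfl : v₃ = v₀ := ((hx v₃).1 h₃₄.symm).resolve_right h₂₃.ne'
        exact hαβ (hc'xw.1 ▸ hc'xz.2 ▸ hB).symm
      · exact hβ' v₃ v₄ h₂₃ h₃₄ (Ne.symm h₁₃) h₄ (hc'xw.1 ▸ hB)
    · obtain rfl : v₃ = zs := ((hz v₃).1 h₂₃).resolve_left (Ne.symm h₁₃)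
      exact hβz' (hc'xw.2 ▸ hA)
    · exact h₀₂ rfl
  · rintro v₀ v₁ v₃ v₄ ⟨h₀₁, h₁₂, h₂₃, h₃₄, h₀₂, h₁₃, h₂₄, hA, hB⟩
    rcases (hx v₁).1 h₁₂.symm with rfl | rfl <;> rcases (hx v₃).1 h₂₃ with rfl | rfl
    · exact h₁₃ rfl
    · obtain rfl : v₀ = zs := ((hz v₀).1 h₀₁.symm).resolve_left h₀₂
      exact hβz' (by rw [Sym2.eq_swap, hA, hc'xw.1])
    · obtain rfl : v₄ = zs := ((hz v₄).1 h₃₄).resolve_left (Ne.symm h₂₄)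
      exact hβz' (hc'xw.2 ▸ hB)
    · exact h₁₃ rfl

end Thread

section Subcubic

variable {V : Type*} [Fintype V] {k : ℕ} {G : SimpleGraph V} [DecidableRel G.Adj]

theorem ncard_colorsAt_le {H : SimpleGraph V} (hH : H ≤ G) (c : Sym2 V → Fin k) (u : V) :
    (colorsAt H c u).ncard ≤ G.degree u :=
  calc (colorsAt H c u).ncard ≤ ((fun t => c s(u, t)) '' G.neighborSet u).ncard :=
        Set.ncard_le_ncard (by rintro _ ⟨t, ht, rfl⟩; exact ⟨t, hH ht, rfl⟩)
    _ ≤ (G.neighborSet u).ncard := Set.ncard_image_le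
    _ = G.degree u := G.ncard_neighborSet_eq_degree u

theorem exists_ne_and_notMem_colorsAt {H : SimpleGraph V} (hH : H ≤ G) (c : Sym2 V → Fin k)
    (u : V) (hu : G.degree u + 1 < k) (a : Fin k) : ∃ b, b ≠ a ∧ b ∉ colorsAt H c u := by
  simp_rw [← not_or, ← Set.mem_insert_iff]
  by_contra! h
  have := (Set.ncard_insert_le a _).trans (Nat.add_le_add_right (ncard_colorsAt_le hH c u) 1)
  rw [Set.eq_univ_of_forall h, Set.ncard_univ, Nat.card_eq_fintype_card, Fintype.card_fin] at this
  omega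

variable [DecidableEq V] {x z w zs : V}

theorem StarEdgeColorable.of_deleteVert_of_thread_of_degree_le_two
    (hsub : ∀ v, G.degree v ≤ 3) (hNx : G.neighborSet x = {z, w}) (hzw : z ≠ w)
    (hNz : G.neighborSet z = {x, zs}) (hzsx : zs ≠ x) (hw : G.degree w ≤ 2)
    (h : StarEdgeColorable (G.deleteVert x) 5) : StarEdgeColorable G 5 := by
  obtain ⟨c, hc⟩ := h
  have hxw : G.Adj x w := by rw [← mem_neighborSet, hNx]; simp
  obtain ⟨ws, hws⟩ := exists_adj_imp_eq_or_mem (s := {x}) (by simpa using hxw.symm)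
    (by simpa using hw)
  obtain ⟨β, hβz, hβ⟩ := exists_ne_and_notMem_colorsAt (deleteVert_le G x) c ws
    (by have := hsub ws; omega) (c s(z, zs))
  obtain ⟨α, hαβ, hα⟩ := exists_ne_and_notMem_colorsAt (deleteVert_le G x) c zs
    (by have := hsub zs; omega) β
  refine ⟨_, hc.extend_thread hNx hzw hNz hzsx hαβ hα (fun t ht => ?_) hβz⟩
  obtain rfl : t = ws := (hws t ht.1).resolve_right (by simpa using ht.2.2)
  exact hβ

theorem StarEdgeColorable.of_deleteVert_of_thread_of_pendant
    (hsub : ∀ v, G.degree v ≤ 3) (hNx : G.neighborSet x = {z, w}) (hzw : z ≠ w)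
    (hNz : G.neighborSet z = {x, zs}) (hzsx : zs ≠ x) {v : V} (hwv : G.Adj w v)
    (hv : G.degree v ≤ 1) (h : StarEdgeColorable (G.deleteVert x) 5) :
    StarEdgeColorable G 5 := by
  obtain ⟨c, hc⟩ := h
  have hxz : G.Adj x z := by rw [← mem_neighborSet, hNx]; simp
  have hxw : G.Adj x w := by rw [← mem_neighborSet, hNx]; simp
  have hzzs : G.Adj z zs := by rw [← mem_neighborSet, hNz]; simp
  have hvw (t : V) (ht : G.Adj v t) : t = w := eq_of_adj_of_degree_le_one hv hwv.symm ht
  have hvx : v ≠ x := fun h => hzw (hvw z (h ▸ hxz))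
  have hvz : v ≠ z := fun h => hxw.ne (hvw x (h ▸ hxz.symm))
  have hvzs : v ≠ zs := fun h => hzw (hvw z (h ▸ hzzs.symm))
  obtain ⟨u, hu⟩ := exists_adj_imp_eq_or_mem (G := G) (v := w) (s := {x, v})
    (by simp [Finset.insert_subset_iff, hxw.symm, hwv])
    (by rw [Finset.card_pair hvx.symm]; have := hsub w; omega)
  set H := G.deleteVert x
  have hHG : H ≤ G := deleteVert_le G x
  obtain ⟨β, hβz, hβ⟩ :=
    exists_ne_and_notMem_colorsAt hHG c u (by have := hsub u; omega) (c s(z, zs))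
  obtain ⟨m, hmβ, hm⟩ := exists_ne_and_notMem_colorsAt hHG c u (by have := hsub u; omega) β
  have hwt (t : V) (ht : H.Adj w t) (htv : t ≠ v) : t = u := by
    simpa [ht.2.2, htv] using hu t ht.1
  -- `β` avoids the colors around `u`; the pendant edge `wv` is recolored away from `β`
  set c₀ : Sym2 V → Fin 5 := fun e => if v ∈ e then m else c e
  have hc₀ : IsStarEdgeColoring H 5 c₀ :=
    (hc.mono (deleteVert_le H v)).extend_pendant (fun t ht => hvw t ht.1) fun t ht htv =>
      hwt t ht htv ▸ hm
  obtain ⟨α, hαβ, hα⟩ := exists_ne_and_notMem_colorsAt hHG c₀ zs (by have := hsub zs; omega) β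
  refine ⟨_, hc₀.extend_thread hNx hzw hNz hzsx hαβ hα (fun t ht => ?_)
    (by simpa [c₀, hvz, hvzs] using hβz)⟩
  by_cases htv : t = v
  · rintro ⟨r, -, hr⟩
    simp only [c₀, htv, Sym2.mem_iff, true_or, if_true] at hr
    exact hmβ hr
  · obtain rfl := hwt t ht htv
    have hrv (r : V) (hr : H.Adj t r) : v ∉ s(t, r) := by
      simpa [Ne.symm htv] using fun h : v = r => ht.1.ne' (hvw t (h ▸ hr.1.symm))
    have hcol : colorsAt H c₀ t = colorsAt H c t := by
      ext a
      exact exists_congr fun r => and_congr_right fun hr => by simp [c₀, hrv r hr]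
    exact hcol ▸ hβ

end Subcubic

theorem lemma2e_general {V : Type*} [Fintype V] [DecidableEq V] (G : SimpleGraph V)
    [DecidableRel G.Adj] (hsub : ∀ v : V, G.degree v ≤ 3)
    (hcrit : StarCritical G 5)
    (x z w : V) (hzw : z ≠ w)
    (hNx : G.neighborSet x = {z, w})
    (zs : V) (hzsx : zs ≠ x)
    (hNz : G.neighborSet z = {x, zs}) :
    G.degree zs = 3 ∧ G.degree w = 3 ∧
      ∀ v ∈ G.neighborSet w ∪ G.neighborSet zs, 2 ≤ G.degree v := by
  obtain ⟨hncol, hdel⟩ := hcrit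
  have hw3 : G.degree w = 3 := by
    by_contra hw
    exact hncol (.of_deleteVert_of_thread_of_degree_le_two hsub hNx hzw hNz hzsx
      (by have := hsub w; omega) (hdel x))
  have hzs3 : G.degree zs = 3 := by
    by_contra hzs
    exact hncol (.of_deleteVert_of_thread_of_degree_le_two hsub hNz (Ne.symm hzsx) hNx
      (Ne.symm hzw) (by have := hsub zs; omega) (hdel z))
  refine ⟨hzs3, hw3, fun v hv => ?_⟩
  by_contra! hv₂
  rcases hv with hv | hv
  · exact hncol (.of_deleteVert_of_thread_of_pendant hsub hNx hzw hNz hzsx hv (by omega)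
      (hdel x))
  · exact hncol (.of_deleteVert_of_thread_of_pendant hsub hNz (Ne.symm hzsx) hNx (Ne.symm hzw)
      hv (by omega) (hdel z))

/-- Lemma 2(e): `k = 5` case. If `d(z) = 2` with `N_G(z) = {x, z*}`, then
`d(z*) = d(w) = 3` and every vertex of `N_G(w) ∪ N_G(z*)` has degree at least 2. -/
theorem lemma2e {V : Type*} [Fintype V] [DecidableEq V] (G : SimpleGraph V)
    [DecidableRel G.Adj] (hsub : ∀ v : V, G.degree v ≤ 3)
    (hcrit : StarCritical G 5)
    (x z w : V) (hx : G.degree x = 2) (hzw : z ≠ w)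
    (hNx : G.neighborSet x = {z, w}) (hd : G.degree z ≤ G.degree w)
    (hz : G.degree z = 2) (zs : V) (hzsx : zs ≠ x)
    (hNz : G.neighborSet z = {x, zs}) :
    G.degree zs = 3 ∧ G.degree w = 3 ∧
      ∀ v ∈ G.neighborSet w ∪ G.neighborSet zs, 2 ≤ G.degree v :=
  lemma2e_general G hsub hcrit x z w hzw hNx zs hzsx hNz
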